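/- arXiv:2408.07548 — 12 statements merged into one kernel-verified Lean document; each statement's English description precedes it below -/
import Mathlib

section
/- Let * be a continuous t-norm on a closed interval [a,b] of the reals. If q ∈ [a,b] is idempotent (q*q = q), then p*q = min{p,q} for all p ∈ [a,b]. -/
open scoped ENNReal

/-- A distance distribution: a map `[0,∞] → [0,1]` with value `0` at `0`, `1` at `∞`,
monotone and left-continuous on `(0,∞)`. -/
structure IsDistanceDistribution (φ : ℝ≥0∞ → ℝ) : Prop where
  mem : ∀ t, φ t ∈ Set.Icc (0:ℝ) 1
  zero : φ 0 = 0
  top : φ ⊤ = 1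
  mono : Monotone φ
  leftCont : ∀ t : ℝ≥0∞, 0 < t → t ≠ ⊤ → φ t = ⨆ s : {s : ℝ≥0∞ // s < t}, φ s.1

/-- A continuous t-norm on the interval `[a,b] ⊆ ℝ`. -/
structure IsContinuousTNorm (a b : ℝ) (m : ℝ → ℝ → ℝ) : Prop where
  mem : ∀ ⦃p q : ℝ⦄, p ∈ Set.Icc a b → q ∈ Set.Icc a b → m p q ∈ Set.Icc a b
  comm : ∀ ⦃p q : ℝ⦄, p ∈ Set.Icc a b → q ∈ Set.Icc a b → m p q = m q p
  assoc : ∀ ⦃p q r : ℝ⦄, p ∈ Set.Icc a b → q ∈ Set.Icc a b → r ∈ Set.Icc a b →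
    m (m p q) r = m p (m q r)
  unit : ∀ ⦃p : ℝ⦄, p ∈ Set.Icc a b → m p b = p
  mono : ∀ ⦃p p' q q' : ℝ⦄, p ∈ Set.Icc a b → p' ∈ Set.Icc a b → q ∈ Set.Icc a b →
    q' ∈ Set.Icc a b → p ≤ p' → q ≤ q' → m p q ≤ m p' q'
  continuous : ContinuousOn (fun x : ℝ × ℝ => m x.1 x.2) (Set.Icc a b ×ˢ Set.Icc a b)

/-- `α` is a probabilistic metric on `X` with respect to the t-norm `m` on `[0,1]`. -/
structure IsProbMetric {X : Type*} (m : ℝ → ℝ → ℝ) (α : X → X → ℝ≥0∞ → ℝ) : Prop where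
  dd : ∀ x y, IsDistanceDistribution (α x y)
  refl : ∀ x (t : ℝ≥0∞), 0 < t → α x x t = 1
  symm : ∀ x y t, α x y t = α y x t
  sep : ∀ x y, (∀ t : ℝ≥0∞, 0 < t → α x y t = 1) → x = y
  triangle : ∀ x y z (r s : ℝ≥0∞), m (α y z r) (α x y s) ≤ α x z (r + s)

/-- The approach distance induced by a probabilistic metric:
`δ_α(x,A) = inf { r | sup_{a ∈ A} α(x,a,r) = 1 }`. -/
noncomputable def probDist {X : Type*} (α : X → X → ℝ≥0∞ → ℝ) (x : X) (A : Set X) : ℝ≥0∞ :=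
  sInf {r : ℝ≥0∞ | sSup ((fun a => α x a r) '' A) = 1}

/-- `δ` is an approach structure on `X`. -/
structure IsApproach {X : Type*} (δ : X → Set X → ℝ≥0∞) : Prop where
  point : ∀ x, δ x {x} = 0
  empty : ∀ x, δ x (∅ : Set X) = ⊤
  union : ∀ x A B, δ x (A ∪ B) = min (δ x A) (δ x B)
  triangle : ∀ x (A B : Set X), δ x A ≤ (⨆ b : B, δ b.1 A) + δ x B

/-- An approach structure is probabilistic metrizable w.r.t. the t-norm `m`. -/
def ProbMetrizable {X : Type*} (m : ℝ → ℝ → ℝ) (δ : X → Set X → ℝ≥0∞) : Prop :=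
  ∃ α : X → X → ℝ≥0∞ → ℝ, IsProbMetric m α ∧ ∀ x A, δ x A = probDist α x A

/-- The minimum t-norm. -/
def minT : ℝ → ℝ → ℝ := fun p q => min p q
/-- The product t-norm. -/
def prodT : ℝ → ℝ → ℝ := fun p q => p * q
/-- The Łukasiewicz t-norm. -/
def lukT : ℝ → ℝ → ℝ := fun p q => max 0 (p + q - 1)

/-- `q⁻`: the largest idempotent element of `m` in `[a, q]`. -/
noncomputable def idemBelow (a : ℝ) (m : ℝ → ℝ → ℝ) (q : ℝ) : ℝ :=
  sSup {p : ℝ | p ∈ Set.Icc a q ∧ m p p = p}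
/-! For `p ≤ q`, the continuous map `x ↦ x * q` runs from `a` to `q` on `[a,b]`, so by the
intermediate value theorem `p = x * q` for some `x`; then `p * q = x * (q * q) = x * q = p`.
For `q ≤ p`, monotonicity squeezes `p * q` between `q * q = q` and `b * q = q`. -/

namespace IsContinuousTNorm

variable {a b : ℝ} {m : ℝ → ℝ → ℝ} {p q : ℝ}

theorem left_mem_Icc (hq : q ∈ Set.Icc a b) : a ∈ Set.Icc a b :=
  ⟨le_rfl, hq.1.trans hq.2⟩

theorem right_mem_Icc (hq : q ∈ Set.Icc a b) : b ∈ Set.Icc a b :=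
  ⟨hq.1.trans hq.2, le_rfl⟩

theorem top_mul (hm : IsContinuousTNorm a b m) (hq : q ∈ Set.Icc a b) : m b q = q := by
  rw [hm.comm (right_mem_Icc hq) hq, hm.unit hq]

theorem mul_le_left (hm : IsContinuousTNorm a b m) (hp : p ∈ Set.Icc a b)
    (hq : q ∈ Set.Icc a b) : m p q ≤ p :=
  calc m p q ≤ m p b := hm.mono hp hp hq (right_mem_Icc hq) le_rfl hq.2
    _ = p := hm.unit hp

theorem mul_le_right (hm : IsContinuousTNorm a b m) (hp : p ∈ Set.Icc a b)
    (hq : q ∈ Set.Icc a b) : m p q ≤ q :=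
  calc m p q ≤ m b q := hm.mono hp (right_mem_Icc hq) hq hq hp.2 le_rfl
    _ = q := hm.top_mul hq

theorem bot_mul (hm : IsContinuousTNorm a b m) (hq : q ∈ Set.Icc a b) : m a q = a :=
  le_antisymm (hm.mul_le_left (left_mem_Icc hq) hq) (hm.mem (left_mem_Icc hq) hq).1

theorem continuousOn_mul_right (hm : IsContinuousTNorm a b m) (hq : q ∈ Set.Icc a b) :
    ContinuousOn (fun x => m x q) (Set.Icc a b) :=
  hm.continuous.comp (continuous_id.prodMk continuous_const).continuousOn
    fun _ hx => Set.mk_mem_prod hx hq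

theorem exists_mul_right_eq (hm : IsContinuousTNorm a b m) (hq : q ∈ Set.Icc a b)
    (hp : p ∈ Set.Icc a q) : ∃ x ∈ Set.Icc a b, m x q = p := by
  have hp' : p ∈ Set.Icc (m a q) (m b q) := by rwa [hm.bot_mul hq, hm.top_mul hq]
  exact intermediate_value_Icc (hq.1.trans hq.2) (hm.continuousOn_mul_right hq) hp'

theorem mul_eq_left_of_idem (hm : IsContinuousTNorm a b m) (hq : q ∈ Set.Icc a b)
    (hqi : m q q = q) (hp : p ∈ Set.Icc a q) : m p q = p := by
  obtain ⟨x, hx, rfl⟩ := hm.exists_mul_right_eq hq hp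
  rw [hm.assoc hx hq hq, hqi]

theorem mul_eq_right_of_idem (hm : IsContinuousTNorm a b m) (hq : q ∈ Set.Icc a b)
    (hqi : m q q = q) (hp : p ∈ Set.Icc a b) (hqp : q ≤ p) : m p q = q :=
  le_antisymm (hm.mul_le_right hp hq) <|
    calc q = m q q := hqi.symm
      _ ≤ m p q := hm.mono hq hp hq hq hqp le_rfl

end IsContinuousTNorm

theorem stmt1_general {a b : ℝ} (m : ℝ → ℝ → ℝ) (hm : IsContinuousTNorm a b m)
    {q : ℝ} (hq : q ∈ Set.Icc a b) (hqi : m q q = q) :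
    ∀ p ∈ Set.Icc a b, m p q = min p q := by
  intro p hp
  rcases le_total p q with hpq | hqp
  · rw [min_eq_left hpq, hm.mul_eq_left_of_idem hq hqi ⟨hp.1, hpq⟩]
  · rw [min_eq_right hqp, hm.mul_eq_right_of_idem hq hqi hp hqp]

theorem stmt1 {a b : ℝ} (hab : a ≤ b) (m : ℝ → ℝ → ℝ) (hm : IsContinuousTNorm a b m)
    {q : ℝ} (hq : q ∈ Set.Icc a b) (hqi : m q q = q) :
    ∀ p ∈ Set.Icc a b, m p q = min p q :=
  stmt1_general m hm hq hqi
end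

section
/- Let * be a continuous t-norm on [a,b], and for q ∈ [a,b] define q⁻ = sup{p ∈ [a,q] | p*p = p}, the largest idempotent element ≤ q. Then (p*q)⁻ = min{p⁻, q⁻} for all p,q ∈ [a,b]. -/
open scoped ENNReal

lemma idemBelow_spec {a b : ℝ} (hab : a ≤ b) {m : ℝ → ℝ → ℝ} (hm : IsContinuousTNorm a b m)
    {q : ℝ} (hq : q ∈ Set.Icc a b) :
    idemBelow a m q ∈ Set.Icc a q ∧
      m (idemBelow a m q) (idemBelow a m q) = idemBelow a m q := by
  have ha : a ∈ Set.Icc a b := ⟨le_rfl, hab⟩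
  have haa : m a a = a := by
    have h1 : a ≤ m a a := (hm.mem ha ha).1
    have h2 : m a a ≤ m a b := hm.mono ha ha ha ⟨hab, le_rfl⟩ le_rfl hab
    rw [hm.unit ha] at h2
    exact le_antisymm h2 h1
  set S := {p : ℝ | p ∈ Set.Icc a q ∧ m p p = p} with hS
  have hne : S.Nonempty := ⟨a, ⟨le_rfl, hq.1⟩, haa⟩
  have hbdd : BddAbove S := ⟨q, fun p hp => hp.1.2⟩
  have hsle : sSup S ≤ q := csSup_le hne fun p hp => hp.1.2
  have hsge : a ≤ sSup S := le_csSup hbdd ⟨⟨le_rfl, hq.1⟩, haa⟩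
  have hsmem : sSup S ∈ Set.Icc a b := ⟨hsge, hsle.trans hq.2⟩
  refine ⟨⟨hsge, hsle⟩, le_antisymm ?_ ?_⟩
  · have h2 : m (sSup S) (sSup S) ≤ m (sSup S) b :=
      hm.mono hsmem hsmem hsmem ⟨hab, le_rfl⟩ le_rfl hsmem.2
    rwa [hm.unit hsmem] at h2
  · refine csSup_le hne fun p hp => ?_
    have hpmem : p ∈ Set.Icc a b := ⟨hp.1.1, hp.1.2.trans hq.2⟩
    have := hm.mono hpmem hsmem hpmem hsmem (le_csSup hbdd hp) (le_csSup hbdd hp)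
    rwa [hp.2] at this

theorem stmt2 {a b : ℝ} (hab : a ≤ b) (m : ℝ → ℝ → ℝ) (hm : IsContinuousTNorm a b m) :
    ∀ p ∈ Set.Icc a b, ∀ q ∈ Set.Icc a b,
      idemBelow a m (m p q) = min (idemBelow a m p) (idemBelow a m q) := by
  intro p hp q hq
  have hr : m p q ∈ Set.Icc a b := hm.mem hp hq
  have hrp : m p q ≤ p := by
    have := hm.mono hp hp hq ⟨hab, le_rfl⟩ le_rfl hq.2
    rwa [hm.unit hp] at this
  have hrq : m p q ≤ q := by
    have := hm.mono hp hp hq ⟨hab, le_rfl⟩ le_rfl hq.2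
    rw [hm.unit hp] at this
    calc m p q ≤ m b q := hm.mono hp ⟨hab, le_rfl⟩ hq hq hp.2 le_rfl
    _ = m q b := hm.comm ⟨hab, le_rfl⟩ hq
    _ = q := hm.unit hq
  obtain ⟨hpmem, hpidem⟩ := idemBelow_spec hab hm hp
  obtain ⟨hqmem, hqidem⟩ := idemBelow_spec hab hm hq
  obtain ⟨hrmem, _⟩ := idemBelow_spec hab hm hr
  have hbddp : BddAbove {x : ℝ | x ∈ Set.Icc a p ∧ m x x = x} := ⟨p, fun x hx => hx.1.2⟩
  have hbddq : BddAbove {x : ℝ | x ∈ Set.Icc a q ∧ m x x = x} := ⟨q, fun x hx => hx.1.2⟩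
  have hbddr : BddAbove {x : ℝ | x ∈ Set.Icc a (m p q) ∧ m x x = x} :=
    ⟨m p q, fun x hx => hx.1.2⟩
  have hner : {x : ℝ | x ∈ Set.Icc a (m p q) ∧ m x x = x}.Nonempty := by
    have ha : a ∈ Set.Icc a b := ⟨le_rfl, hab⟩
    have haa : m a a = a := by
      have h1 : a ≤ m a a := (hm.mem ha ha).1
      have h2 : m a a ≤ m a b := hm.mono ha ha ha ⟨hab, le_rfl⟩ le_rfl hab
      rw [hm.unit ha] at h2
      exact le_antisymm h2 h1
    exact ⟨a, ⟨le_rfl, hr.1⟩, haa⟩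
  refine le_antisymm (le_min ?_ ?_) ?_
  · exact csSup_le_csSup hbddp hner fun x hx => ⟨⟨hx.1.1, hx.1.2.trans hrp⟩, hx.2⟩
  · exact csSup_le_csSup hbddq hner fun x hx => ⟨⟨hx.1.1, hx.1.2.trans hrq⟩, hx.2⟩
  · -- c := min p⁻ q⁻ is an idempotent ≤ m p q
    set c := min (idemBelow a m p) (idemBelow a m q) with hc
    have hcmem : c ∈ Set.Icc a b := by
      rcases min_cases (idemBelow a m p) (idemBelow a m q) with ⟨h, _⟩ | ⟨h, _⟩ <;>
        rw [hc, h]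
      · exact ⟨hpmem.1, hpmem.2.trans hp.2⟩
      · exact ⟨hqmem.1, hqmem.2.trans hq.2⟩
    have hcidem : m c c = c := by
      rcases min_cases (idemBelow a m p) (idemBelow a m q) with ⟨h, _⟩ | ⟨h, _⟩ <;>
        rw [hc, h]
      · exact hpidem
      · exact hqidem
    have hcp : c ≤ p := (min_le_left _ _).trans hpmem.2
    have hcq : c ≤ q := (min_le_right _ _).trans hqmem.2
    have hcr : c ≤ m p q := by
      have := hm.mono hcmem hp hcmem hq hcp hcq
      rwa [hcidem] at this
    have hca : a ≤ c := le_min hpmem.1 hqmem.1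
    exact le_csSup hbddr ⟨⟨hca, hcr⟩, hcidem⟩
end

section
/- Let (X, α) be a probabilistic metric space with respect to a continuous t-norm * on [0,1], and define δ_α(x, A) = inf{ r ∈ [0,∞] | sup_{a∈A} α(x,a,r) = 1 }. Then (X, δ_α) is an approach space; in particular, the triangle inequality δ_α(x, A) ≤ sup_{b∈B} δ_α(b, A) + δ_α(x, B) holds for all x ∈ X and A, B ⊆ X. -/
open scoped ENNReal

/-!
Say that `x` is `r`-near `A` when `sup_{a ∈ A} α(x, a, r) = 1`, so that `δ_α(x, A)` is the infimum
of those `r`; nearness is upward closed in `r` because each `α(x, a, -)` is monotone. Axioms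
(A1)–(A3) are then immediate. For (A4), if every `b ∈ B` is `r`-near `A` and `x` is `s`-near `B`,
then `x` is `(r + s)`-near `A`: continuity of the t-norm at `(1, 1)` makes `α(b, a, r) * α(x, b, s)`
close to `1` as soon as both factors are, and the probabilistic triangle inequality bounds this
product by `α(x, a, r + s)`.
-/

lemma sSup_image_eq_one_iff {ι : Type*} {f : ι → ℝ} {A : Set ι} (hf : ∀ i ∈ A, f i ≤ 1) :
    sSup (f '' A) = 1 ↔ ∀ c < 1, ∃ a ∈ A, c < f a := by
  constructor
  · intro hsup c hc
    have hne : (f '' A).Nonempty := by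
      by_contra hempty
      rw [Set.not_nonempty_iff_eq_empty.1 hempty, Real.sSup_empty] at hsup
      exact zero_ne_one hsup
    obtain ⟨_, ⟨a, ha, rfl⟩, hca⟩ := exists_lt_of_lt_csSup hne (hsup ▸ hc)
    exact ⟨a, ha, hca⟩
  · intro hnear
    obtain ⟨a, ha, -⟩ := hnear 0 one_pos
    have hbdd : BddAbove (f '' A) := ⟨1, Set.forall_mem_image.2 hf⟩
    refine le_antisymm (csSup_le ((Set.nonempty_of_mem ha).image f) (Set.forall_mem_image.2 hf))
      (le_of_forall_lt fun c hc => ?_)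
    obtain ⟨a, ha, hca⟩ := hnear c hc
    exact lt_csSup_of_lt hbdd ⟨a, ha, rfl⟩ hca

lemma IsContinuousTNorm.exists_forall_lt_of_lt {m : ℝ → ℝ → ℝ} {a b : ℝ}
    (hm : IsContinuousTNorm a b m) (hab : a ≤ b) {c : ℝ} (hc : c < b) :
    ∃ θ < b, ∀ ⦃p q : ℝ⦄, p ∈ Set.Icc a b → q ∈ Set.Icc a b → θ ≤ p → θ ≤ q → c < m p q := by
  have hb : b ∈ Set.Icc a b := ⟨hab, le_rfl⟩
  obtain ⟨ε, hε, hball⟩ :=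
    Metric.continuousWithinAt_iff.1 (hm.continuous (b, b) ⟨hb, hb⟩) (b - c) (by linarith)
  refine ⟨b - ε / 2, by linarith, fun p q hp hq hθp hθq => ?_⟩
  have hpq : dist (p, q) (b, b) < ε := by
    rw [Prod.dist_eq, Real.dist_eq, Real.dist_eq, abs_of_nonpos (by linarith [hp.2]),
      abs_of_nonpos (by linarith [hq.2])]
    exact max_lt (by linarith) (by linarith)
  have hclose := hball (x := (p, q)) ⟨hp, hq⟩ hpq
  rw [hm.unit hb, Real.dist_eq, abs_lt] at hclose
  linarith [hclose.1]

section Nearness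

variable {X : Type*} {m : ℝ → ℝ → ℝ} {α : X → X → ℝ≥0∞ → ℝ} {x : X} {A B : Set X}
  {r s : ℝ≥0∞}

def IsNear (α : X → X → ℝ≥0∞ → ℝ) (x : X) (A : Set X) (r : ℝ≥0∞) : Prop :=
  ∀ c < 1, ∃ a ∈ A, c < α x a r

lemma probDist_eq_sInf_isNear (h : IsProbMetric m α) (x : X) (A : Set X) :
    probDist α x A = sInf {r | IsNear α x A r} := by
  simp only [probDist, sSup_image_eq_one_iff fun a _ => ((h.dd x a).mem _).2, IsNear]

lemma IsNear.mono (hα : ∀ a, Monotone (α x a)) (hr : IsNear α x A r) (hrs : r ≤ s) :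
    IsNear α x A s := fun c hc =>
  let ⟨a, ha, hca⟩ := hr c hc
  ⟨a, ha, hca.trans_le (hα a hrs)⟩

lemma isNear_of_probDist_lt (h : IsProbMetric m α) (hr : probDist α x A < r) :
    IsNear α x A r := by
  rw [probDist_eq_sInf_isNear h] at hr
  obtain ⟨r', hr', hlt⟩ := sInf_lt_iff.1 hr
  exact hr'.mono (fun a => (h.dd x a).mono) hlt.le

lemma probDist_le_of_isNear (h : IsProbMetric m α) (hr : IsNear α x A r) :
    probDist α x A ≤ r :=
  (probDist_eq_sInf_isNear h x A).trans_le (sInf_le hr)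

lemma isNear_union_iff : IsNear α x (A ∪ B) r ↔ IsNear α x A r ∨ IsNear α x B r := by
  refine ⟨fun hnear => ?_, ?_⟩
  · by_contra! hfar
    simp only [IsNear, not_forall, not_exists, not_and, not_lt] at hfar
    obtain ⟨⟨c₁, hc₁, hA⟩, ⟨c₂, hc₂, hB⟩⟩ := hfar
    obtain ⟨a, ha | ha, hlt⟩ := hnear (max c₁ c₂) (max_lt hc₁ hc₂)
    · exact (hA a ha).not_gt ((le_max_left _ _).trans_lt hlt)
    · exact (hB a ha).not_gt ((le_max_right _ _).trans_lt hlt)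
  · rintro (hnear | hnear) c hc <;> obtain ⟨a, ha, hca⟩ := hnear c hc
    exacts [⟨a, Or.inl ha, hca⟩, ⟨a, Or.inr ha, hca⟩]

lemma IsNear.trans (hm : IsContinuousTNorm 0 1 m) (h : IsProbMetric m α)
    (hBA : ∀ b ∈ B, IsNear α b A r) (hxB : IsNear α x B s) : IsNear α x A (r + s) := by
  intro c hc
  obtain ⟨θ, hθ, hmθ⟩ := hm.exists_forall_lt_of_lt zero_le_one hc
  obtain ⟨b, hb, hxb⟩ := hxB θ hθ
  obtain ⟨a, ha, hba⟩ := hBA b hb θ hθ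
  exact ⟨a, ha, (hmθ ((h.dd b a).mem r) ((h.dd x b).mem s) hba.le hxb.le).trans_le
    (h.triangle x b a r s)⟩

lemma probDist_singleton (h : IsProbMetric m α) (x : X) : probDist α x {x} = 0 :=
  le_antisymm (le_of_forall_gt_imp_ge_of_dense fun r hr =>
    probDist_le_of_isNear h fun c hc => ⟨x, rfl, by rwa [h.refl x r hr]⟩) zero_le

lemma probDist_empty (h : IsProbMetric m α) (x : X) : probDist α x ∅ = ⊤ := by
  rw [probDist_eq_sInf_isNear h, sInf_eq_top]
  intro r hr
  obtain ⟨a, ha, -⟩ := hr 0 one_pos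
  exact ha.elim

lemma probDist_union (h : IsProbMetric m α) (x : X) (A B : Set X) :
    probDist α x (A ∪ B) = min (probDist α x A) (probDist α x B) := by
  simp only [probDist_eq_sInf_isNear h, isNear_union_iff, Set.ofPred_or, sInf_union]

lemma probDist_le_iSup_add (hm : IsContinuousTNorm 0 1 m) (h : IsProbMetric m α)
    (x : X) (A B : Set X) :
    probDist α x A ≤ (⨆ b : B, probDist α b.1 A) + probDist α x B := by
  by_contra! hlt
  obtain ⟨r, hr, s, hs, hrs⟩ := ENNReal.exists_add_lt_of_add_lt hlt
  have hBA : ∀ b ∈ B, IsNear α b A r := fun b hb =>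
    isNear_of_probDist_lt h ((le_iSup (fun b : B => probDist α b.1 A) ⟨b, hb⟩).trans_lt hr)
  exact (probDist_le_of_isNear h (IsNear.trans hm h hBA (isNear_of_probDist_lt h hs))).not_gt hrs

end Nearness

theorem stmt6 {X : Type*} (m : ℝ → ℝ → ℝ) (hm : IsContinuousTNorm 0 1 m)
    (α : X → X → ℝ≥0∞ → ℝ) (h : IsProbMetric m α) :
    IsApproach (fun x A => probDist α x A) :=
  ⟨probDist_singleton h, probDist_empty h, probDist_union h, probDist_le_iSup_add hm h⟩
end

section
/- Let (X, α) and (Y, β) be probabilistic metric spaces with respect to a continuous t-norm * on [0,1], and let f : X → Y be non-expansive, i.e., α(x, x', t) ≤ β(f(x), f(x'), t) for all x, x' ∈ X and t ∈ [0,∞]. Then f is a contraction between the induced approach spaces: δ_α(x, A) ≥ δ_β(f(x), f(A)) for all x ∈ X and A ⊆ X. -/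
open scoped ENNReal

theorem stmt7 {X Y : Type*} (m : ℝ → ℝ → ℝ) (hm : IsContinuousTNorm 0 1 m)
    (α : X → X → ℝ≥0∞ → ℝ) (β : Y → Y → ℝ≥0∞ → ℝ)
    (hα : IsProbMetric m α) (hβ : IsProbMetric m β) (f : X → Y)
    (hf : ∀ x x' t, α x x' t ≤ β (f x) (f x') t) :
    ∀ (x : X) (A : Set X), probDist β (f x) (f '' A) ≤ probDist α x A := by
  intro x A
  apply sInf_le_sInf
  intro r hr
  simp only [Set.mem_setOf_eq] at hr ⊢
  rcases A.eq_empty_or_nonempty with rfl | ⟨a0, ha0⟩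
  · simp at hr
  have hbdd : BddAbove ((fun a => β (f x) a r) '' (f '' A)) := by
    refine ⟨1, ?_⟩
    rintro y ⟨b, ⟨a, _, rfl⟩, rfl⟩
    exact ((hβ.dd (f x) (f a)).mem r).2
  have hle : sSup ((fun a => β (f x) a r) '' (f '' A)) ≤ 1 := by
    apply Real.sSup_le _ zero_le_one
    rintro y ⟨b, ⟨a, _, rfl⟩, rfl⟩
    exact ((hβ.dd (f x) (f a)).mem r).2
  have hge : (1:ℝ) ≤ sSup ((fun a => β (f x) a r) '' (f '' A)) := by
    rw [← hr]
    apply Real.sSup_le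
    · rintro y ⟨a, ha, rfl⟩
      exact le_trans (hf x a r) (le_csSup hbdd ⟨f a, ⟨a, ha, rfl⟩, rfl⟩)
    · exact le_trans ((hα.dd x a0).mem r).1
        (le_trans (hf x a0 r) (le_csSup hbdd ⟨f a0, ⟨a0, ha0, rfl⟩, rfl⟩))
  linarith
end

section
/- Let (X, α) be a probabilistic metric space with induced approach structure δ_α(x,A) = inf{r | sup_{a∈A} α(x,a,r) = 1}. For x ∈ X and A ⊆ X, the following are equivalent: (i) δ_α(x, A) = 0; (ii) for every t ∈ (0,∞) there exists a ∈ A with α(x, a, t) > 1 − t. -/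
open scoped ENNReal

theorem stmt8 {X : Type*} (m : ℝ → ℝ → ℝ) (hm : IsContinuousTNorm 0 1 m)
    (α : X → X → ℝ≥0∞ → ℝ) (h : IsProbMetric m α) (x : X) (A : Set X) :
    probDist α x A = 0 ↔
      ∀ t : ℝ≥0∞, 0 < t → t ≠ ⊤ → ∃ a ∈ A, 1 - t.toReal < α x a t := by
  constructor
  · intro h0 t ht htop
    have hS : sInf {r : ℝ≥0∞ | sSup ((fun a => α x a r) '' A) = 1} = ⊥ := h0
    rw [sInf_eq_bot] at hS
    obtain ⟨r, hrS, hrt⟩ := hS t ht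
    simp only [Set.mem_setOf_eq] at hrS
    have hne : ((fun a => α x a r) '' A).Nonempty := by
      by_contra hne
      rw [Set.not_nonempty_iff_eq_empty] at hne
      rw [hne, Real.sSup_empty] at hrS
      norm_num at hrS
    have htpos : (0:ℝ) < t.toReal := ENNReal.toReal_pos ht.ne' htop
    have h1 : 1 - t.toReal < sSup ((fun a => α x a r) '' A) := by
      rw [hrS]; linarith
    obtain ⟨y, hy, hlt⟩ := exists_lt_of_lt_csSup hne h1
    obtain ⟨a, haA, rfl⟩ := hy
    exact ⟨a, haA, lt_of_lt_of_le hlt ((h.dd x a).mono hrt.le)⟩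
  · intro hyp
    rw [probDist, show (0:ℝ≥0∞) = ⊥ from rfl, sInf_eq_bot]
    intro b hb
    obtain ⟨r, hr0, hrb⟩ := exists_between hb
    have hrtop : r ≠ ⊤ := (hrb.trans_le le_top).ne
    refine ⟨r, ?_, hrb⟩
    have bdd : BddAbove ((fun a => α x a r) '' A) := by
      refine ⟨1, ?_⟩
      rintro y ⟨a, ha, rfl⟩
      exact ((h.dd x a).mem r).2
    show sSup ((fun a => α x a r) '' A) = 1
    apply le_antisymm
    · apply Real.sSup_le
      · rintro y ⟨a, ha, rfl⟩
        exact ((h.dd x a).mem r).2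
      · norm_num
    · apply le_of_forall_sub_le
      intro ε hε
      set t := min r (ENNReal.ofReal ε) with htdef
      have ht0 : 0 < t := lt_min hr0 (ENNReal.ofReal_pos.mpr hε)
      have httop : t ≠ ⊤ := ne_top_of_le_ne_top hrtop (min_le_left _ _)
      obtain ⟨a, haA, hlt⟩ := hyp t ht0 httop
      have htε : t.toReal ≤ ε := by
        calc t.toReal ≤ (ENNReal.ofReal ε).toReal :=
              ENNReal.toReal_mono ENNReal.ofReal_ne_top (min_le_right _ _)
          _ = ε := ENNReal.toReal_ofReal hε.le
      have hmono : α x a t ≤ α x a r := (h.dd x a).mono (min_le_left _ _)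
      have hmem : α x a r ≤ sSup ((fun a => α x a r) '' A) :=
        le_csSup bdd ⟨a, haA, rfl⟩
      linarith
end

section
/- Let * be a continuous t-norm on [0,1] such that the supremum of the idempotent elements of * in [0,1) equals 1. Then for every subset A ⊆ [0,1], sup A = 1 if and only if sup{ a⁻ | a ∈ A } = 1, where a⁻ denotes the largest idempotent element of * below a. -/
open scoped ENNReal

theorem stmt9 (m : ℝ → ℝ → ℝ) (hm : IsContinuousTNorm 0 1 m)
    (hk : sSup {q : ℝ | q ∈ Set.Ico (0:ℝ) 1 ∧ m q q = q} = 1) :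
    ∀ A : Set ℝ, A ⊆ Set.Icc 0 1 →
      (sSup A = 1 ↔ sSup (idemBelow 0 m '' A) = 1) := by
  intro A hA
  have h01 : m 0 1 = 0 := hm.unit ⟨le_refl 0, zero_le_one⟩
  have h00 : m 0 0 = 0 := by
    have h1 := (hm.mem (Set.left_mem_Icc.2 zero_le_one) (Set.left_mem_Icc.2 zero_le_one)).1
    have h2 := hm.mono (Set.left_mem_Icc.2 zero_le_one) (Set.left_mem_Icc.2 zero_le_one)
      (Set.left_mem_Icc.2 zero_le_one) (Set.right_mem_Icc.2 zero_le_one) le_rfl zero_le_one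
    rw [h01] at h2
    linarith
  have hib_le : ∀ q ∈ Set.Icc (0:ℝ) 1, idemBelow 0 m q ≤ q := by
    intro q hq
    unfold idemBelow
    refine csSup_le ⟨0, ⟨le_rfl, hq.1⟩, h00⟩ fun p hp => hp.1.2
  have hbddA : BddAbove A := ⟨1, fun a ha => (hA ha).2⟩
  have hbddI : BddAbove (idemBelow 0 m '' A) := by
    refine ⟨1, ?_⟩
    rintro _ ⟨a, ha, rfl⟩
    exact (hib_le a (hA ha)).trans (hA ha).2
  constructor
  · intro hs
    have hAne : A.Nonempty := by
      by_contra h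
      rw [Set.not_nonempty_iff_eq_empty] at h
      simp [h, Real.sSup_empty] at hs
    refine le_antisymm (csSup_le (hAne.image _) ?_) ?_
    · rintro _ ⟨a, ha, rfl⟩
      exact (hib_le a (hA ha)).trans (hA ha).2
    · rw [← hk]
      refine csSup_le ⟨0, ⟨le_rfl, zero_lt_one⟩, h00⟩ ?_
      rintro q ⟨hq, hqi⟩
      obtain ⟨a, haA, hqa⟩ := exists_lt_of_lt_csSup hAne (hs ▸ hq.2)
      have hqib : q ≤ idemBelow 0 m a := by
        unfold idemBelow
        exact le_csSup ⟨a, fun p hp => hp.1.2⟩ ⟨⟨hq.1, hqa.le⟩, hqi⟩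
      exact hqib.trans (le_csSup hbddI ⟨a, haA, rfl⟩)
  · intro hs
    have hAne : A.Nonempty := by
      by_contra h
      rw [Set.not_nonempty_iff_eq_empty] at h
      simp [h, Real.sSup_empty] at hs
    refine le_antisymm (csSup_le hAne fun a ha => (hA ha).2) ?_
    rw [← hs]
    apply csSup_le (hAne.image _)
    rintro _ ⟨a, ha, rfl⟩
    exact (hib_le a (hA ha)).trans (le_csSup hbddA ha)
end

section
/- An approach space (X, δ) is probabilistic metrizable with respect to the product t-norm *_P if and only if it is probabilistic metrizable with respect to the Łukasiewicz t-norm *_Ł. -/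
open scoped ENNReal

/-!
Both directions rest on the same device: compose a probabilistic metric with an increasing
continuous self-map `g` of `[0,1]` that detects the value `1`, and reset the value at time `0`
to `0`. Since `g` commutes with suprema and `g u = 1 ↔ u = 1`, the sets
`{r | sup_{a ∈ A} α(x,a,r) = 1}` do not change, so neither does the induced approach structure.
It remains to find `g` turning the triangle inequality for one t-norm into that for the other:
`u ↦ e^{u-1}` carries `*_Ł` to `*_P`, and `u ↦ 1 + log (max u e⁻¹)` carries `*_P` to `*_Ł`.
-/

open Set Real

structure IsDistTransform (g : ℝ → ℝ) : Prop where
  mono : Monotone g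
  continuous : Continuous g
  mapsTo : MapsTo g (Icc 0 1) (Icc 0 1)
  eq_one_iff : ∀ u ∈ Icc (0 : ℝ) 1, g u = 1 ↔ u = 1

noncomputable def distComp (g : ℝ → ℝ) (φ : ℝ≥0∞ → ℝ) (t : ℝ≥0∞) : ℝ :=
  if t = 0 then 0 else g (φ t)

section DistComp

variable {g : ℝ → ℝ} {φ : ℝ≥0∞ → ℝ}

lemma IsDistTransform.map_one (hg : IsDistTransform g) : g 1 = 1 :=
  (hg.eq_one_iff 1 (right_mem_Icc.2 zero_le_one)).2 rfl

lemma IsDistTransform.sSup_image_eq_one_iff (hg : IsDistTransform g) {S : Set ℝ}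
    (hS : S.Nonempty) (hS01 : S ⊆ Icc 0 1) : sSup (g '' S) = 1 ↔ sSup S = 1 := by
  have hbdd : BddAbove S := ⟨1, fun _ hu => (hS01 hu).2⟩
  obtain ⟨u, hu⟩ := hS
  have hsup : sSup S ∈ Icc (0 : ℝ) 1 :=
    ⟨(hS01 hu).1.trans (le_csSup hbdd hu), csSup_le ⟨u, hu⟩ fun _ hv => (hS01 hv).2⟩
  rw [← hg.mono.map_csSup_of_continuousAt hg.continuous.continuousAt ⟨u, hu⟩ hbdd]
  exact hg.eq_one_iff _ hsup

lemma distComp_zero : distComp g φ 0 = 0 := if_pos rfl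

lemma distComp_of_ne_zero {t : ℝ≥0∞} (ht : t ≠ 0) : distComp g φ t = g (φ t) := if_neg ht

variable (hg : IsDistTransform g) (hφ : IsDistanceDistribution φ)
include hg hφ

lemma distComp_mem_Icc (t : ℝ≥0∞) : distComp g φ t ∈ Icc 0 1 := by
  rcases eq_or_ne t 0 with rfl | ht
  · rw [distComp_zero]; exact left_mem_Icc.2 zero_le_one
  · rw [distComp_of_ne_zero ht]; exact hg.mapsTo (hφ.mem t)

lemma monotone_distComp : Monotone (distComp g φ) := by
  intro s t hst
  rcases eq_or_ne s 0 with rfl | hs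
  · rw [distComp_zero]; exact (distComp_mem_Icc hg hφ t).1
  · rw [distComp_of_ne_zero hs, distComp_of_ne_zero (ne_bot_of_le_ne_bot hs hst)]
    exact hg.mono (hφ.mono hst)

lemma distComp_eq_iSup {t : ℝ≥0∞} (ht : 0 < t) (htop : t ≠ ⊤) :
    distComp g φ t = ⨆ s : {s : ℝ≥0∞ // s < t}, distComp g φ s.1 := by
  have : Nonempty {s : ℝ≥0∞ // s < t} := ⟨⟨0, ht⟩⟩
  have hbdd : BddAbove (range fun s : {s : ℝ≥0∞ // s < t} => distComp g φ s.1) :=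
    ⟨1, by rintro _ ⟨s, rfl⟩; exact (distComp_mem_Icc hg hφ s.1).2⟩
  refine le_antisymm ?_ (ciSup_le fun s => monotone_distComp hg hφ s.2.le)
  rw [distComp_of_ne_zero ht.ne', hφ.leftCont t ht htop,
    hg.mono.map_ciSup_of_continuousAt hg.continuous.continuousAt ⟨1, by
      rintro _ ⟨s, rfl⟩; exact (hφ.mem s.1).2⟩]
  -- at `s = 0` the reset value is too small, so compare with a later positive time instead
  obtain ⟨c, hc0, hct⟩ := exists_between ht
  refine ciSup_le fun s => ?_
  calc g (φ s.1) ≤ g (φ (max s.1 c)) := hg.mono (hφ.mono (le_max_left _ _))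
    _ = distComp g φ (max s.1 c) :=
        (distComp_of_ne_zero (hc0.trans_le (le_max_right _ _)).ne').symm
    _ ≤ _ := le_ciSup hbdd ⟨max s.1 c, max_lt s.2 hct⟩

lemma IsDistanceDistribution.distComp : IsDistanceDistribution (distComp g φ) where
  mem := distComp_mem_Icc hg hφ
  zero := distComp_zero
  top := by rw [distComp_of_ne_zero ENNReal.top_ne_zero, hφ.top, hg.map_one]
  mono := monotone_distComp hg hφ
  leftCont _ := distComp_eq_iSup hg hφ

end DistComp

section ProbMetric

variable {X : Type*} {g : ℝ → ℝ} {α : X → X → ℝ≥0∞ → ℝ}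

lemma probDist_distComp (hg : IsDistTransform g) (hα : ∀ x y, IsDistanceDistribution (α x y))
    (x : X) (A : Set X) : probDist (fun x y => distComp g (α x y)) x A = probDist α x A := by
  unfold probDist
  congr 1
  ext r
  simp only [mem_ofPred_eq]
  rcases A.eq_empty_or_nonempty with rfl | hA
  · simp only [image_empty]
  rcases eq_or_ne r 0 with rfl | hr
  · simp only [distComp_zero, (hα _ _).zero]
  rw [image_congr fun a _ => distComp_of_ne_zero hr, ← image_image g]
  exact hg.sSup_image_eq_one_iff (hA.image _) (by rintro _ ⟨a, _, rfl⟩; exact (hα x a).mem r)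

lemma IsProbMetric.distComp {m m' : ℝ → ℝ → ℝ} (hα : IsProbMetric m α)
    (hg : IsDistTransform g)
    (hm'_zero_left : ∀ q ∈ Icc (0 : ℝ) 1, m' 0 q = 0)
    (hm'_zero_right : ∀ p ∈ Icc (0 : ℝ) 1, m' p 0 = 0)
    (hgm : ∀ p ∈ Icc (0 : ℝ) 1, ∀ q ∈ Icc (0 : ℝ) 1, ∀ r ∈ Icc (0 : ℝ) 1,
      m p q ≤ r → m' (g p) (g q) ≤ g r) :
    IsProbMetric m' (fun x y => distComp g (α x y)) where
  dd x y := (hα.dd x y).distComp hg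
  refl x t ht := by rw [distComp_of_ne_zero ht.ne', hα.refl x t ht, hg.map_one]
  symm x y t := by rw [show α x y = α y x from funext (hα.symm x y)]
  sep x y h := hα.sep x y fun t ht => by
    have h1 := h t ht
    rw [distComp_of_ne_zero ht.ne'] at h1
    exact (hg.eq_one_iff _ ((hα.dd x y).mem t)).1 h1
  triangle x y z r s := by
    have hmem := fun x y => distComp_mem_Icc hg (hα.dd x y)
    rcases eq_or_ne r 0 with rfl | hr
    · rw [distComp_zero, hm'_zero_left _ (hmem x y s)]; exact (hmem x z _).1
    rcases eq_or_ne s 0 with rfl | hs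
    · rw [distComp_zero, hm'_zero_right _ (hmem y z r)]; exact (hmem x z _).1
    rw [distComp_of_ne_zero hr, distComp_of_ne_zero hs,
      distComp_of_ne_zero (add_ne_zero.2 (Or.inl hr))]
    exact hgm _ ((hα.dd y z).mem r) _ ((hα.dd x y).mem s) _ ((hα.dd x z).mem _)
      (hα.triangle x y z r s)

lemma ProbMetrizable.of_distTransform {m m' : ℝ → ℝ → ℝ} {δ : X → Set X → ℝ≥0∞}
    (h : ProbMetrizable m δ) (hg : IsDistTransform g)
    (hm'_zero_left : ∀ q ∈ Icc (0 : ℝ) 1, m' 0 q = 0)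
    (hm'_zero_right : ∀ p ∈ Icc (0 : ℝ) 1, m' p 0 = 0)
    (hgm : ∀ p ∈ Icc (0 : ℝ) 1, ∀ q ∈ Icc (0 : ℝ) 1, ∀ r ∈ Icc (0 : ℝ) 1,
      m p q ≤ r → m' (g p) (g q) ≤ g r) :
    ProbMetrizable m' δ := by
  obtain ⟨α, hα, hδα⟩ := h
  exact ⟨_, hα.distComp hg hm'_zero_left hm'_zero_right hgm,
    fun x A => (hδα x A).trans (probDist_distComp hg hα.dd x A).symm⟩

end ProbMetric

lemma prodT_zero_left (q : ℝ) : prodT 0 q = 0 := zero_mul q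

lemma prodT_zero_right (p : ℝ) : prodT p 0 = 0 := mul_zero p

lemma lukT_zero_left {q : ℝ} (hq : q ≤ 1) : lukT 0 q = 0 := max_eq_left (by linarith)

lemma lukT_zero_right {p : ℝ} (hp : p ≤ 1) : lukT p 0 = 0 := max_eq_left (by linarith)

noncomputable def lukToProd (u : ℝ) : ℝ := exp (u - 1)

lemma isDistTransform_lukToProd : IsDistTransform lukToProd where
  mono _ _ h := exp_le_exp.2 (by linarith)
  continuous := by unfold lukToProd; fun_prop
  mapsTo _ hu := ⟨(exp_pos _).le, exp_le_one_iff.2 (by linarith [hu.2])⟩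
  eq_one_iff u _ := by rw [lukToProd, exp_eq_one_iff, sub_eq_zero]

lemma prodT_lukToProd_le {p q r : ℝ} (h : lukT p q ≤ r) :
    prodT (lukToProd p) (lukToProd q) ≤ lukToProd r := by
  have : p + q - 1 ≤ r := (le_max_right _ _).trans h
  rw [prodT, lukToProd, lukToProd, lukToProd, ← exp_add]
  exact exp_le_exp.2 (by linarith)

/-- The inverse of `lukToProd` on `[e⁻¹, 1]`, extended by `0` below `e⁻¹`. -/
noncomputable def prodToLuk (u : ℝ) : ℝ := 1 + log (max u (exp (-1)))

lemma max_exp_neg_one_pos (u : ℝ) : 0 < max u (exp (-1)) := lt_max_of_lt_right (exp_pos _)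

lemma isDistTransform_prodToLuk : IsDistTransform prodToLuk where
  mono _ _ h :=
    (add_le_add_iff_left 1).2 (log_le_log (max_exp_neg_one_pos _) (max_le_max_right _ h))
  continuous := continuous_const.add <| continuous_iff_continuousAt.2 fun u =>
    (continuous_id.max continuous_const).continuousAt.log (max_exp_neg_one_pos u).ne'
  mapsTo u hu := by
    have hlow : -1 ≤ log (max u (exp (-1))) := by
      simpa using log_le_log (exp_pos _) (le_max_right u (exp (-1)))
    have hup : log (max u (exp (-1))) ≤ 0 :=
      log_nonpos (max_exp_neg_one_pos u).le (max_le hu.2 (exp_le_one_iff.2 (by norm_num)))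
    exact ⟨by rw [prodToLuk]; linarith, by rw [prodToLuk]; linarith⟩
  eq_one_iff u hu := by
    have hc : exp (-1) < 1 := exp_lt_one_iff.2 (by norm_num)
    rw [prodToLuk, add_eq_left, log_eq_zero]
    constructor
    · rintro (h | h | h)
      · exact absurd h (max_exp_neg_one_pos u).ne'
      · rcases max_choice u (exp (-1)) with h' | h' <;> rw [h'] at h
        · exact h
        · exact absurd h hc.ne
      · exact absurd h (by linarith [max_exp_neg_one_pos u])
    · rintro rfl
      exact Or.inr (Or.inl (max_eq_left hc.le))

lemma add_prodToLuk_le {p q : ℝ} (hp : p ≤ 1) (hq : q ≤ 1) :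
    prodToLuk p + prodToLuk q - 1 ≤ prodToLuk (p * q) := by
  set c := exp (-1)
  have hc0 : 0 < c := exp_pos _
  have hc1 : c ≤ 1 := exp_le_one_iff.2 (by norm_num)
  -- `max p c * max q c` exceeds `c` only through the term `p * q`
  have hprod : max p c * max q c ≤ max (p * q) c := by
    rcases max_cases p c with ⟨hP, hpc⟩ | ⟨hP, hpc⟩ <;>
    rcases max_cases q c with ⟨hQ, hqc⟩ | ⟨hQ, hqc⟩ <;> rw [hP, hQ]
    · exact le_max_left _ _
    · exact le_max_of_le_right (by nlinarith)
    · exact le_max_of_le_right (by nlinarith)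
    · exact le_max_of_le_right (by nlinarith)
  have hlog := log_le_log (mul_pos (max_exp_neg_one_pos p) (max_exp_neg_one_pos q)) hprod
  rw [log_mul (max_exp_neg_one_pos p).ne' (max_exp_neg_one_pos q).ne'] at hlog
  simp only [prodToLuk]
  linarith

lemma lukT_prodToLuk_le {p q r : ℝ} (hp : p ≤ 1) (hq : q ≤ 1) (hr : r ∈ Icc (0 : ℝ) 1)
    (h : prodT p q ≤ r) : lukT (prodToLuk p) (prodToLuk q) ≤ prodToLuk r :=
  max_le (isDistTransform_prodToLuk.mapsTo hr).1 <|
    (add_prodToLuk_le hp hq).trans (isDistTransform_prodToLuk.mono h)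

theorem stmt10_general {X : Type*} (δ : X → Set X → ℝ≥0∞) :
    ProbMetrizable prodT δ ↔ ProbMetrizable lukT δ :=
  ⟨fun h => h.of_distTransform isDistTransform_prodToLuk (fun _ hq => lukT_zero_left hq.2)
      (fun _ hp => lukT_zero_right hp.2) fun _ hp _ hq _ hr => lukT_prodToLuk_le hp.2 hq.2 hr,
    fun h => h.of_distTransform isDistTransform_lukToProd (fun q _ => prodT_zero_left q)
      (fun p _ => prodT_zero_right p) fun _ _ _ _ _ _ => prodT_lukToProd_le⟩

theorem stmt10 {X : Type*} (δ : X → Set X → ℝ≥0∞) (hδ : IsApproach δ) :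
    ProbMetrizable prodT δ ↔ ProbMetrizable lukT δ :=
  stmt10_general δ
end

section
/- Let α be a probabilistic metric on X with respect to the Łukasiewicz t-norm *_Ł. Define β(x,y,0) = 0 and β(x,y,t) = e^{α(x,y,t)−1} for t > 0. Then β is a probabilistic metric on X with respect to the product t-norm *_P, and δ_α = δ_β. -/
open scoped ENNReal

/-! The reparametrisation `v ↦ e^{v-1}` is monotone, continuous, maps `[0,1]` into `[0,1]` and
takes the value `1` only at `1`; it turns the Łukasiewicz triangle inequality into the product one,
since `e^{p-1} e^{q-1} = e^{p+q-2} ≤ e^{(p *_Ł q) - 1}`. Resetting the value at `0` to `0` keeps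
each `β x y` a distance distribution, and since `δ` only records the radii at which
`sup_{a ∈ A} α(x,a,r)` reaches `1`, which such a reparametrisation preserves, `δ_α = δ_β`. -/

open Real Set

theorem monotone_exp_sub_one : Monotone fun v : ℝ => exp (v - 1) :=
  fun _ _ h => exp_le_exp.2 (by linarith)

theorem continuous_exp_sub_one : Continuous fun v : ℝ => exp (v - 1) := by
  fun_prop

theorem exp_sub_one_eq_one_iff {v : ℝ} : exp (v - 1) = 1 ↔ v = 1 := by
  rw [exp_eq_one_iff, sub_eq_zero]

theorem exp_sub_one_mem_Icc {v : ℝ} (hv : v ≤ 1) : exp (v - 1) ∈ Icc (0 : ℝ) 1 :=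
  ⟨(exp_pos _).le, exp_le_one_iff.2 (by linarith)⟩

theorem exp_sub_one_mul_exp_sub_one_le (p q : ℝ) :
    exp (p - 1) * exp (q - 1) ≤ exp (lukT p q - 1) := by
  rw [← exp_add]
  exact exp_le_exp.2 (by unfold lukT; linarith [le_max_right 0 (p + q - 1)])

theorem IsDistanceDistribution.of_eq_comp {φ ψ : ℝ≥0∞ → ℝ} {g : ℝ → ℝ}
    (hφ : IsDistanceDistribution φ) (hg : Monotone g) (hgc : Continuous g)
    (hg01 : ∀ v ∈ Icc (0 : ℝ) 1, g v ∈ Icc (0 : ℝ) 1) (hg1 : g 1 = 1)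
    (hψ0 : ψ 0 = 0) (hψ : ∀ t ≠ 0, ψ t = g (φ t)) : IsDistanceDistribution ψ := by
  have mem : ∀ t, ψ t ∈ Icc (0 : ℝ) 1 := by
    intro t
    rcases eq_or_ne t 0 with rfl | ht
    · simp [hψ0]
    · exact hψ t ht ▸ hg01 _ (hφ.mem t)
  have mono : Monotone ψ := by
    intro s t hst
    rcases eq_or_ne s 0 with rfl | hs
    · exact hψ0 ▸ (mem t).1
    · rw [hψ s hs, hψ t (ne_bot_of_le_ne_bot hs hst)]
      exact hg (hφ.mono hst)
  refine ⟨mem, hψ0, by rw [hψ ⊤ (by simp), hφ.top, hg1], mono, fun t ht htop => ?_⟩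
  have hbdd : ∀ f : ℝ≥0∞ → ℝ, (∀ s, f s ≤ 1) →
      BddAbove (range fun s : {s : ℝ≥0∞ // s < t} => f s.1) :=
    fun f hf => ⟨1, by rintro _ ⟨s, rfl⟩; exact hf s.1⟩
  have : Nonempty {s : ℝ≥0∞ // s < t} := ⟨⟨0, ht⟩⟩
  refine le_antisymm ?_ (ciSup_le fun s => mono s.2.le)
  rw [hψ t ht.ne', hφ.leftCont t ht htop,
    hg.map_ciSup_of_continuousAt hgc.continuousAt (hbdd φ fun s => (hφ.mem s).2)]
  obtain ⟨u₀, hu₀, hu₀t⟩ := exists_between ht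
  -- Raising `s` to `max s u₀ ≠ 0` avoids `ψ 0 = 0`, which `g ∘ φ` does not share.
  refine ciSup_le fun s => le_trans ?_
    (le_ciSup (hbdd ψ fun s => (mem s).2) ⟨max s.1 u₀, max_lt s.2 hu₀t⟩)
  rw [hψ _ (hu₀.trans_le (le_max_right _ _)).ne']
  exact hg (hφ.mono (le_max_left _ _))

theorem probDist_eq_of_eq_comp {X : Type*} {α β : X → X → ℝ≥0∞ → ℝ} {g : ℝ → ℝ}
    (hg : Monotone g) (hgc : Continuous g) (hg1 : ∀ v, g v = 1 ↔ v = 1)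
    (x : X) (A : Set X) (hα0 : ∀ a ∈ A, α x a 0 = 0)
    (hβ0 : ∀ a ∈ A, β x a 0 = 0)
    (hβ : ∀ a ∈ A, ∀ r ≠ 0, β x a r = g (α x a r))
    (hbdd : ∀ r, BddAbove ((fun a => α x a r) '' A)) :
    probDist α x A = probDist β x A := by
  unfold probDist
  congr 1
  ext r
  rcases A.eq_empty_or_nonempty with rfl | hA
  · simp
  rcases eq_or_ne r 0 with rfl | hr
  · have hsSup_zero : ∀ γ : X → X → ℝ≥0∞ → ℝ, (∀ a ∈ A, γ x a 0 = 0) →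
        sSup ((fun a => γ x a 0) '' A) = 0 := fun γ hγ => by
      rw [image_congr hγ, hA.image_const, csSup_singleton]
    simp [hsSup_zero α hα0, hsSup_zero β hβ0]
  · rw [mem_ofPred_eq, mem_ofPred_eq, image_congr fun a ha => hβ a ha r hr,
      ← image_image g (fun a => α x a r), ← hg.map_csSup_of_continuousAt hgc.continuousAt
        (hA.image _) (hbdd r), hg1]

theorem isProbMetric_prodT_of_exp_sub_one {X : Type*} {α β : X → X → ℝ≥0∞ → ℝ}
    (hα : IsProbMetric lukT α) (hβ0 : ∀ x y, β x y 0 = 0)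
    (hβ : ∀ x y (t : ℝ≥0∞), t ≠ 0 → β x y t = exp (α x y t - 1)) :
    IsProbMetric prodT β := by
  have hdd : ∀ x y, IsDistanceDistribution (β x y) := fun x y =>
    (hα.dd x y).of_eq_comp monotone_exp_sub_one continuous_exp_sub_one
      (fun _ hv => exp_sub_one_mem_Icc hv.2) (by simp) (hβ0 x y) (hβ x y)
  refine ⟨hdd, fun x t ht => ?_, fun x y t => ?_, fun x y h => ?_, fun x y z r s => ?_⟩
  · rw [hβ x x t ht.ne', hα.refl x t ht, sub_self, exp_zero]
  · rcases eq_or_ne t 0 with rfl | ht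
    · rw [hβ0, hβ0]
    · rw [hβ x y t ht, hβ y x t ht, hα.symm]
  · exact hα.sep x y fun t ht => exp_sub_one_eq_one_iff.1 (hβ x y t ht.ne' ▸ h t ht)
  · unfold prodT
    rcases eq_or_ne r 0 with rfl | hr
    · simpa [hβ0] using ((hdd x z).mem _).1
    rcases eq_or_ne s 0 with rfl | hs
    · simpa [hβ0] using ((hdd x z).mem _).1
    calc β y z r * β x y s = exp (α y z r - 1) * exp (α x y s - 1) := by
          rw [hβ _ _ _ hr, hβ _ _ _ hs]
      _ ≤ exp (lukT (α y z r) (α x y s) - 1) := exp_sub_one_mul_exp_sub_one_le _ _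
      _ ≤ exp (α x z (r + s) - 1) := monotone_exp_sub_one (hα.triangle x y z r s)
      _ = β x z (r + s) := (hβ _ _ _ (by simp [hr, hs])).symm

theorem stmt11 {X : Type*} (α β : X → X → ℝ≥0∞ → ℝ) (hα : IsProbMetric lukT α)
    (hβ0 : ∀ x y, β x y 0 = 0)
    (hβ : ∀ x y (t : ℝ≥0∞), t ≠ 0 → β x y t = Real.exp (α x y t - 1)) :
    IsProbMetric prodT β ∧ ∀ x A, probDist α x A = probDist β x A :=
  ⟨isProbMetric_prodT_of_exp_sub_one hα hβ0 hβ, fun x A =>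
    probDist_eq_of_eq_comp monotone_exp_sub_one continuous_exp_sub_one
      (fun _ => exp_sub_one_eq_one_iff) x A (fun a _ => (hα.dd x a).zero)
      (fun a _ => hβ0 x a) (fun a _ => hβ x a)
      fun r => ⟨1, by rintro _ ⟨a, _, rfl⟩; exact ((hα.dd x a).mem r).2⟩⟩
end

section
/- Let * be a continuous t-norm on [0,1] with k* = sup{q ∈ [0,1) | q*q = q} = 1, and let α be a probabilistic metric on X with respect to *. Define β(x,y,t) = sup_{s<t} α(x,y,s)⁻ for t < ∞ and β(x,y,∞) = 1, where a⁻ is the largest idempotent of * below a. Then β is a probabilistic metric on X with respect to the minimum t-norm *_M, and δ_β = δ_α. Consequently, if k* = 1, an approach space is *-metrizable if and only if it is *_M-metrizable. -/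
open scoped ENNReal

section Idem
variable {m : ℝ → ℝ → ℝ} (hm : IsContinuousTNorm 0 1 m)
include hm

lemma m_zero_zero : m 0 0 = 0 := by
  have h0 : (0:ℝ) ∈ Set.Icc (0:ℝ) 1 := by norm_num
  have h1 : (1:ℝ) ∈ Set.Icc (0:ℝ) 1 := by norm_num
  have := hm.mono h0 h0 h0 h1 le_rfl zero_le_one
  rw [hm.unit h0] at this
  exact le_antisymm this (hm.mem h0 h0).1

lemma m_le_left {p q : ℝ} (hp : p ∈ Set.Icc (0:ℝ) 1) (hq : q ∈ Set.Icc (0:ℝ) 1) :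
    m p q ≤ p := by
  have h1 : (1:ℝ) ∈ Set.Icc (0:ℝ) 1 := by norm_num
  have := hm.mono hp hp hq h1 le_rfl hq.2
  rwa [hm.unit hp] at this

lemma m_le_right {p q : ℝ} (hp : p ∈ Set.Icc (0:ℝ) 1) (hq : q ∈ Set.Icc (0:ℝ) 1) :
    m p q ≤ q := by
  rw [hm.comm hp hq]; exact m_le_left hm hq hp

lemma idemSet_nonempty {q : ℝ} (hq : q ∈ Set.Icc (0:ℝ) 1) :
    {p : ℝ | p ∈ Set.Icc 0 q ∧ m p p = p}.Nonempty :=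
  ⟨0, ⟨le_rfl, hq.1⟩, m_zero_zero hm⟩

omit hm in
lemma idemSet_bdd (q : ℝ) : BddAbove {p : ℝ | p ∈ Set.Icc 0 q ∧ m p p = p} :=
  ⟨q, fun _ hp => hp.1.2⟩

lemma idemSet_closed {q : ℝ} (hq : q ∈ Set.Icc (0:ℝ) 1) :
    IsClosed {p : ℝ | p ∈ Set.Icc 0 q ∧ m p p = p} := by
  have hsub : Set.Icc (0:ℝ) q ⊆ Set.Icc (0:ℝ) 1 := Set.Icc_subset_Icc le_rfl hq.2
  have hc : ContinuousOn (fun p : ℝ => ((fun x : ℝ × ℝ => m x.1 x.2) (p, p), p))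
      (Set.Icc (0:ℝ) q) := by
    apply ContinuousOn.prodMk
    · apply hm.continuous.comp (Continuous.continuousOn (by fun_prop))
      intro p hp; exact ⟨hsub hp, hsub hp⟩
    · exact continuousOn_id
  have h := hc.preimage_isClosed_of_isClosed isClosed_Icc isClosed_diagonal
  have he : {p : ℝ | p ∈ Set.Icc 0 q ∧ m p p = p} =
      Set.Icc (0:ℝ) q ∩ (fun p : ℝ => ((fun x : ℝ × ℝ => m x.1 x.2) (p, p), p)) ⁻¹'
        Set.diagonal ℝ := by
    ext p
    simp only [Set.mem_inter_iff, Set.mem_preimage, Set.mem_setOf_eq, Set.mem_diagonal_iff]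
  rw [he]; exact h

lemma idemBelow_mem {q : ℝ} (hq : q ∈ Set.Icc (0:ℝ) 1) :
    idemBelow 0 m q ∈ Set.Icc (0:ℝ) q ∧ m (idemBelow 0 m q) (idemBelow 0 m q) = idemBelow 0 m q :=
  (idemSet_closed hm hq).csSup_mem (idemSet_nonempty hm hq) (idemSet_bdd q)

lemma idemBelow_nonneg {q : ℝ} (hq : q ∈ Set.Icc (0:ℝ) 1) : 0 ≤ idemBelow 0 m q :=
  (idemBelow_mem hm hq).1.1

lemma idemBelow_le_self {q : ℝ} (hq : q ∈ Set.Icc (0:ℝ) 1) : idemBelow 0 m q ≤ q :=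
  (idemBelow_mem hm hq).1.2

lemma le_idemBelow {e q : ℝ} (hq : q ∈ Set.Icc (0:ℝ) 1) (he0 : 0 ≤ e) (heq : e ≤ q)
    (hee : m e e = e) : e ≤ idemBelow 0 m q :=
  le_csSup (idemSet_bdd q) ⟨⟨he0, heq⟩, hee⟩

lemma idemBelow_mono {q q' : ℝ} (hq0 : 0 ≤ q) (h : q ≤ q') :
    idemBelow 0 m q ≤ idemBelow 0 m q' := by
  apply csSup_le_csSup (idemSet_bdd q')
  · exact ⟨0, ⟨⟨le_rfl, hq0⟩, m_zero_zero hm⟩⟩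
  · rintro p ⟨⟨h0, h1⟩, h2⟩; exact ⟨⟨h0, h1.trans h⟩, h2⟩

lemma idemBelow_one (hk : sSup {q : ℝ | q ∈ Set.Ico (0:ℝ) 1 ∧ m q q = q} = 1) :
    idemBelow 0 m 1 = 1 := by
  have h1 : (1:ℝ) ∈ Set.Icc (0:ℝ) 1 := by norm_num
  refine le_antisymm (idemBelow_le_self hm h1) ?_
  have : sSup {q : ℝ | q ∈ Set.Ico (0:ℝ) 1 ∧ m q q = q} ≤ idemBelow 0 m 1 := by
    refine csSup_le ⟨0, ⟨⟨le_rfl, zero_lt_one⟩, m_zero_zero hm⟩⟩ ?_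
    rintro p ⟨⟨h0, h1'⟩, h2⟩
    exact le_csSup (idemSet_bdd 1) ⟨⟨h0, h1'.le⟩, h2⟩
  linarith [hk ▸ this]

lemma min_idemBelow_le {p q : ℝ} (hp : p ∈ Set.Icc (0:ℝ) 1) (hq : q ∈ Set.Icc (0:ℝ) 1) :
    min (idemBelow 0 m p) (idemBelow 0 m q) ≤ idemBelow 0 m (m p q) := by
  rcases min_cases (idemBelow 0 m p) (idemBelow 0 m q) with ⟨he, hle⟩ | ⟨he, hle⟩ <;> rw [he]
  · -- p⁻ ≤ q⁻
    obtain ⟨⟨h0, hle_p⟩, hidem⟩ := idemBelow_mem hm hp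
    have hIp : idemBelow 0 m p ∈ Set.Icc (0:ℝ) 1 := ⟨h0, hle_p.trans hp.2⟩
    have h1 : idemBelow 0 m p ≤ m p q := by
      calc idemBelow 0 m p = m (idemBelow 0 m p) (idemBelow 0 m p) := hidem.symm
        _ ≤ m p q := hm.mono hIp hp hIp hq hle_p
            (hle.trans ((idemBelow_mem hm hq).1.2))
    exact le_idemBelow hm (hm.mem hp hq) h0 h1 hidem
  · obtain ⟨⟨h0, hle_q⟩, hidem⟩ := idemBelow_mem hm hq
    have hIq : idemBelow 0 m q ∈ Set.Icc (0:ℝ) 1 := ⟨h0, hle_q.trans hq.2⟩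
    have h1 : idemBelow 0 m q ≤ m p q := by
      calc idemBelow 0 m q = m (idemBelow 0 m q) (idemBelow 0 m q) := hidem.symm
        _ ≤ m p q := hm.mono hIq hp hIq hq (hle.le.trans ((idemBelow_mem hm hp).1.2)) hle_q
    exact le_idemBelow hm (hm.mem hp hq) h0 h1 hidem
end Idem

section Main
variable {X : Type*} {m : ℝ → ℝ → ℝ} (hm : IsContinuousTNorm 0 1 m)
  (hk : sSup {q : ℝ | q ∈ Set.Ico (0:ℝ) 1 ∧ m q q = q} = 1)
  {α β : X → X → ℝ≥0∞ → ℝ} (hα : IsProbMetric m α)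
  (hβtop : ∀ x y, β x y ⊤ = 1)
  (hβ : ∀ x y (t : ℝ≥0∞), t ≠ ⊤ →
    β x y t = ⨆ s : {s : ℝ≥0∞ // s < t}, idemBelow 0 m (α x y s.1))
include hm hα

lemma g_mem (x y : X) (s : ℝ≥0∞) : idemBelow 0 m (α x y s) ∈ Set.Icc (0:ℝ) 1 :=
  ⟨idemBelow_nonneg hm ((hα.dd x y).mem s),
    (idemBelow_le_self hm ((hα.dd x y).mem s)).trans ((hα.dd x y).mem s).2⟩

lemma g_le (x y : X) (s : ℝ≥0∞) : idemBelow 0 m (α x y s) ≤ α x y s :=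
  idemBelow_le_self hm ((hα.dd x y).mem s)

lemma g_bdd (x y : X) (t : ℝ≥0∞) :
    BddAbove (Set.range fun s : {s : ℝ≥0∞ // s < t} => idemBelow 0 m (α x y s.1)) := by
  refine ⟨1, ?_⟩
  rintro p ⟨s, rfl⟩
  exact (g_mem hm hα x y s.1).2

include hβtop hβ

lemma β_mem (x y : X) (t : ℝ≥0∞) : β x y t ∈ Set.Icc (0:ℝ) 1 := by
  by_cases ht : t = ⊤
  · rw [ht, hβtop]; exact ⟨zero_le_one, le_rfl⟩
  · rw [hβ x y t ht]
    exact ⟨Real.iSup_nonneg fun s => (g_mem hm hα x y s.1).1,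
      Real.iSup_le (fun s => (g_mem hm hα x y s.1).2) zero_le_one⟩

lemma β_zero (x y : X) : β x y 0 = 0 := by
  rw [hβ x y 0 (by simp)]
  have : IsEmpty {s : ℝ≥0∞ // s < (0:ℝ≥0∞)} := ⟨fun s => by simpa using s.2⟩
  exact Real.iSup_of_isEmpty _

lemma β_mono (x y : X) : Monotone (β x y) := by
  intro t t' htt'
  by_cases ht' : t' = ⊤
  · rw [ht', hβtop]; exact (β_mem hm hα hβtop hβ x y t).2
  · have ht : t ≠ ⊤ := fun h => ht' (top_le_iff.mp (h ▸ htt'))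
    rw [hβ x y t ht, hβ x y t' ht']
    refine Real.iSup_le (fun s => ?_) ?_
    · exact le_ciSup (g_bdd hm hα x y t') ⟨s.1, lt_of_lt_of_le s.2 htt'⟩
    · exact Real.iSup_nonneg fun s => (g_mem hm hα x y s.1).1

lemma β_leftCont (x y : X) (t : ℝ≥0∞) (ht0 : 0 < t) (ht : t ≠ ⊤) :
    β x y t = ⨆ s : {s : ℝ≥0∞ // s < t}, β x y s.1 := by
  have hbdd : BddAbove (Set.range fun s : {s : ℝ≥0∞ // s < t} => β x y s.1) := by
    refine ⟨1, ?_⟩; rintro p ⟨s, rfl⟩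
    exact (β_mem hm hα hβtop hβ x y s.1).2
  refine le_antisymm ?_ ?_
  · rw [hβ x y t ht]
    refine Real.iSup_le (fun s => ?_) ?_
    · obtain ⟨s', hs1, hs2⟩ := exists_between s.2
      have hs'top : s' ≠ ⊤ := fun h => ht (top_le_iff.mp (h ▸ hs2.le))
      have h1 : idemBelow 0 m (α x y s.1) ≤ β x y s' := by
        rw [hβ x y s' hs'top]
        exact le_ciSup (g_bdd hm hα x y s') ⟨s.1, hs1⟩
      exact h1.trans (le_ciSup hbdd ⟨s', hs2⟩)
    · refine Real.iSup_nonneg fun s => (β_mem hm hα hβtop hβ x y s.1).1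
  · refine Real.iSup_le (fun s => β_mono hm hα hβtop hβ x y s.2.le) ?_
    exact (β_mem hm hα hβtop hβ x y t).1

include hk

lemma β_refl (x : X) (t : ℝ≥0∞) (ht0 : 0 < t) : β x x t = 1 := by
  by_cases ht : t = ⊤
  · rw [ht, hβtop]
  · rw [hβ x x t ht]
    obtain ⟨s, hs0, hst⟩ := exists_between ht0
    have h1 : idemBelow 0 m (α x x s) = 1 := by
      rw [hα.refl x s hs0]; exact idemBelow_one hm hk
    refine le_antisymm (Real.iSup_le (fun s => (g_mem hm hα x x s.1).2) zero_le_one) ?_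
    calc (1:ℝ) = idemBelow 0 m (α x x s) := h1.symm
      _ ≤ _ := le_ciSup (g_bdd hm hα x x t) ⟨s, hst⟩

omit hk in
lemma β_symm (x y : X) (t : ℝ≥0∞) : β x y t = β y x t := by
  by_cases ht : t = ⊤
  · rw [ht, hβtop, hβtop]
  · rw [hβ x y t ht, hβ y x t ht]
    exact iSup_congr fun s => by rw [hα.symm]

omit hk in
lemma β_sep (x y : X) (h : ∀ t : ℝ≥0∞, 0 < t → β x y t = 1) : x = y := by
  refine hα.sep x y fun t ht0 => ?_
  by_cases ht : t = ⊤
  · rw [ht]; exact (hα.dd x y).top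
  · refine le_antisymm ((hα.dd x y).mem t).2 ?_
    calc (1:ℝ) = β x y t := (h t ht0).symm
      _ ≤ α x y t := by
          rw [hβ x y t ht]
          refine Real.iSup_le (fun s => ?_) ((hα.dd x y).mem t).1
          exact (g_le hm hα x y s.1).trans ((hα.dd x y).mono s.2.le)

lemma β_triangle (x y z : X) (r s : ℝ≥0∞) :
    minT (β y z r) (β x y s) ≤ β x z (r + s) := by
  by_cases hr : r = ⊤
  · have htop : β x z (r + s) = 1 := by rw [hr, top_add]; exact hβtop x z
    rw [htop]
    exact (min_le_right (β y z r) (β x y s)).trans (β_mem hm hα hβtop hβ x y s).2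
  by_cases hs : s = ⊤
  · have htop : β x z (r + s) = 1 := by rw [hs, add_top]; exact hβtop x z
    rw [htop]
    exact (min_le_right (β y z r) (β x y s)).trans (β_mem hm hα hβtop hβ x y s).2
  by_contra hlt
  push_neg at hlt
  have hrs : r + s ≠ ⊤ := by simp [hr, hs]
  have h1 : β x z (r + s) < β y z r := lt_of_lt_of_le hlt (min_le_left _ _)
  have h2 : β x z (r + s) < β x y s := lt_of_lt_of_le hlt (min_le_right _ _)
  have hr0 : r ≠ 0 := by
    rintro rfl
    rw [β_zero hm hα hβtop hβ] at h1
    exact absurd ((β_mem hm hα hβtop hβ x z (0 + s)).1.trans_lt h1) (lt_irrefl 0).elim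
  have hs0 : s ≠ 0 := by
    rintro rfl
    rw [β_zero hm hα hβtop hβ] at h2
    exact absurd ((β_mem hm hα hβtop hβ x z (r + 0)).1.trans_lt h2) (lt_irrefl 0).elim
  rw [hβ y z r hr] at h1
  rw [hβ x y s hs] at h2
  have : Nonempty {u : ℝ≥0∞ // u < r} := ⟨⟨0, pos_iff_ne_zero.mpr hr0⟩⟩
  have : Nonempty {u : ℝ≥0∞ // u < s} := ⟨⟨0, pos_iff_ne_zero.mpr hs0⟩⟩
  obtain ⟨r', hr'⟩ := exists_lt_of_lt_ciSup h1
  obtain ⟨s', hs'⟩ := exists_lt_of_lt_ciSup h2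
  have key : min (idemBelow 0 m (α y z r'.1)) (idemBelow 0 m (α x y s'.1)) ≤
      β x z (r + s) := by
    have step1 : min (idemBelow 0 m (α y z r'.1)) (idemBelow 0 m (α x y s'.1)) ≤
        idemBelow 0 m (m (α y z r'.1) (α x y s'.1)) :=
      min_idemBelow_le hm ((hα.dd y z).mem r'.1) ((hα.dd x y).mem s'.1)
    have step2 : idemBelow 0 m (m (α y z r'.1) (α x y s'.1)) ≤
        idemBelow 0 m (α x z (r'.1 + s'.1)) :=
      idemBelow_mono hm (hm.mem ((hα.dd y z).mem r'.1) ((hα.dd x y).mem s'.1)).1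
        (hα.triangle x y z r'.1 s'.1)
    have step3 : idemBelow 0 m (α x z (r'.1 + s'.1)) ≤ β x z (r + s) := by
      rw [hβ x z (r + s) hrs]
      exact le_ciSup (g_bdd hm hα x z (r + s)) ⟨r'.1 + s'.1, ENNReal.add_lt_add r'.2 s'.2⟩
    exact step1.trans (step2.trans step3)
  have : β x z (r + s) < min (idemBelow 0 m (α y z r'.1)) (idemBelow 0 m (α x y s'.1)) :=
    lt_min hr' hs'
  exact absurd key (not_le.mpr this)

end Main

section Main2
variable {X : Type*} {m : ℝ → ℝ → ℝ} (hm : IsContinuousTNorm 0 1 m)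
  (hk : sSup {q : ℝ | q ∈ Set.Ico (0:ℝ) 1 ∧ m q q = q} = 1)
  {α β : X → X → ℝ≥0∞ → ℝ} (hα : IsProbMetric m α)
  (hβtop : ∀ x y, β x y ⊤ = 1)
  (hβ : ∀ x y (t : ℝ≥0∞), t ≠ ⊤ →
    β x y t = ⨆ s : {s : ℝ≥0∞ // s < t}, idemBelow 0 m (α x y s.1))
include hm hα hβtop hβ

omit hβtop in
lemma β_le_α (x y : X) (t : ℝ≥0∞) (ht : t ≠ ⊤) : β x y t ≤ α x y t := by
  rw [hβ x y t ht]
  refine Real.iSup_le (fun s => ?_) ((hα.dd x y).mem t).1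
  exact (g_le hm hα x y s.1).trans ((hα.dd x y).mono s.2.le)

include hk in
lemma sup_eq_one_iff (x : X) (A : Set X) (r : ℝ≥0∞) :
    sSup ((fun a => β x a r) '' A) = 1 ↔ sSup ((fun a => α x a r) '' A) = 1 := by
  rcases A.eq_empty_or_nonempty with rfl | ⟨a0, ha0⟩
  · simp
  by_cases hr : r = ⊤
  · subst hr
    have hbb : BddAbove ((fun a => β x a ⊤) '' A) := by
      refine ⟨1, ?_⟩; rintro b ⟨a, _, rfl⟩; exact (hβtop x a).le
    have hba : BddAbove ((fun a => α x a ⊤) '' A) := by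
      refine ⟨1, ?_⟩; rintro b ⟨a, _, rfl⟩; exact ((hα.dd x a).mem ⊤).2
    have h1 : sSup ((fun a => β x a ⊤) '' A) = 1 := by
      refine le_antisymm (Real.sSup_le ?_ zero_le_one) ?_
      · rintro b ⟨a, _, rfl⟩; exact (hβtop x a).le
      · calc (1:ℝ) = β x a0 ⊤ := (hβtop x a0).symm
          _ ≤ _ := le_csSup hbb (Set.mem_image_of_mem _ ha0)
    have h2 : sSup ((fun a => α x a ⊤) '' A) = 1 := by
      refine le_antisymm (Real.sSup_le ?_ zero_le_one) ?_
      · rintro b ⟨a, _, rfl⟩; exact ((hα.dd x a).top).le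
      · calc (1:ℝ) = α x a0 ⊤ := ((hα.dd x a0).top).symm
          _ ≤ _ := le_csSup hba (Set.mem_image_of_mem _ ha0)
    rw [h1, h2]
  constructor
  · intro h
    refine le_antisymm (Real.sSup_le ?_ zero_le_one) ?_
    · rintro b ⟨a, _, rfl⟩; exact ((hα.dd x a).mem r).2
    · calc (1:ℝ) = sSup ((fun a => β x a r) '' A) := h.symm
        _ ≤ sSup ((fun a => α x a r) '' A) := by
            refine csSup_le ⟨β x a0 r, a0, ha0, rfl⟩ ?_
            rintro b ⟨a, ha, rfl⟩
            exact (β_le_α hm hα hβ x a r hr).trans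
              (le_csSup ⟨1, by rintro b ⟨a', _, rfl⟩; exact ((hα.dd x a').mem r).2⟩
                ⟨a, ha, rfl⟩)
  · intro h
    have hr0 : r ≠ 0 := by
      rintro rfl
      have : sSup ((fun a => α x a 0) '' A) ≤ 0 := by
        refine Real.sSup_le ?_ le_rfl
        rintro b ⟨a, _, rfl⟩; exact ((hα.dd x a).zero).le
      rw [h] at this; linarith
    refine le_antisymm (Real.sSup_le ?_ zero_le_one) ?_
    · rintro b ⟨a, _, rfl⟩; exact (β_mem hm hα hβtop hβ x a r).2
    · rw [← hk]
      refine csSup_le ⟨0, ⟨le_rfl, zero_lt_one⟩, m_zero_zero hm⟩ ?_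
      rintro e ⟨⟨he0, he1⟩, hee⟩
      -- find a ∈ A with e < α x a r
      obtain ⟨b, ⟨a, ha, rfl⟩, hb⟩ := exists_lt_of_lt_csSup
        (⟨α x a0 r, a0, ha0, rfl⟩ : ((fun a => α x a r) '' A).Nonempty) (h ▸ he1)
      -- left continuity
      have hb' : e < α x a r := hb
      have hlc := (hα.dd x a).leftCont r (pos_iff_ne_zero.mpr hr0) hr
      rw [hlc] at hb'
      have : Nonempty {s : ℝ≥0∞ // s < r} := ⟨⟨0, pos_iff_ne_zero.mpr hr0⟩⟩
      obtain ⟨s, hs⟩ := exists_lt_of_lt_ciSup hb'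
      have h1 : e ≤ idemBelow 0 m (α x a s.1) :=
        le_idemBelow hm ((hα.dd x a).mem s.1) he0 hs.le hee
      have h2 : idemBelow 0 m (α x a s.1) ≤ β x a r := by
        rw [hβ x a r hr]
        exact le_ciSup (g_bdd hm hα x a r) s
      refine (h1.trans h2).trans (le_csSup ?_ ⟨a, ha, rfl⟩)
      exact ⟨1, by rintro b ⟨a', _, rfl⟩; exact (β_mem hm hα hβtop hβ x a' r).2⟩

include hk in
lemma probDist_eq (x : X) (A : Set X) : probDist β x A = probDist α x A := by
  unfold probDist
  congr 1
  ext r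
  exact sup_eq_one_iff hm hk hα hβtop hβ x A r

include hk in
lemma mainKey : IsProbMetric minT β ∧ ∀ x A, probDist β x A = probDist α x A := by
  refine ⟨⟨fun x y => ⟨β_mem hm hα hβtop hβ x y, β_zero hm hα hβtop hβ x y, hβtop x y,
      β_mono hm hα hβtop hβ x y, β_leftCont hm hα hβtop hβ x y⟩,
      β_refl hm hk hα hβtop hβ, β_symm hm hα hβtop hβ, β_sep hm hα hβtop hβ,
      β_triangle hm hk hα hβtop hβ⟩, probDist_eq hm hk hα hβtop hβ⟩

omit hk hα hβtop hβ in
lemma min_to_m {γ : X → X → ℝ≥0∞ → ℝ} (hγ : IsProbMetric minT γ) : IsProbMetric m γ := by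
  refine ⟨hγ.dd, hγ.refl, hγ.symm, hγ.sep, fun x y z r s => ?_⟩
  refine le_trans ?_ (hγ.triangle x y z r s)
  exact le_min (m_le_left hm ((hγ.dd y z).mem r) ((hγ.dd x y).mem s))
    (m_le_right hm ((hγ.dd y z).mem r) ((hγ.dd x y).mem s))

end Main2


theorem stmt12 {X : Type*} (m : ℝ → ℝ → ℝ) (hm : IsContinuousTNorm 0 1 m)
    (hk : sSup {q : ℝ | q ∈ Set.Ico (0:ℝ) 1 ∧ m q q = q} = 1)
    (α β : X → X → ℝ≥0∞ → ℝ) (hα : IsProbMetric m α)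
    (hβtop : ∀ x y, β x y ⊤ = 1)
    (hβ : ∀ x y (t : ℝ≥0∞), t ≠ ⊤ →
      β x y t = ⨆ s : {s : ℝ≥0∞ // s < t}, idemBelow 0 m (α x y s.1)) :
    (IsProbMetric minT β ∧ ∀ x A, probDist β x A = probDist α x A) ∧
    ∀ δ : X → Set X → ℝ≥0∞, IsApproach δ →
      (ProbMetrizable m δ ↔ ProbMetrizable minT δ) := by
  refine ⟨mainKey hm hk hα hβtop hβ, fun δ _ => ⟨?_, ?_⟩⟩
  · rintro ⟨α', h1, h2⟩
    set β' : X → X → ℝ≥0∞ → ℝ := fun x y t =>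
      if t = ⊤ then (1:ℝ) else ⨆ s : {s : ℝ≥0∞ // s < t}, idemBelow 0 m (α' x y s.1)
      with hβ'def
    have hβ'top : ∀ x y, β' x y ⊤ = 1 := fun x y => if_pos rfl
    have hβ' : ∀ x y (t : ℝ≥0∞), t ≠ ⊤ →
        β' x y t = ⨆ s : {s : ℝ≥0∞ // s < t}, idemBelow 0 m (α' x y s.1) :=
      fun x y t ht => if_neg ht
    obtain ⟨hmet, heq⟩ := mainKey hm hk h1 hβ'top hβ'
    exact ⟨β', hmet, fun x A => (h2 x A).trans (heq x A).symm⟩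
  · rintro ⟨γ, h1, h2⟩
    exact ⟨γ, min_to_m hm h1, h2⟩
end

section
/- Let (X, d) be a metric space and define the probabilistic metric α_d(x,y,t) = 0 if t ≤ d(x,y) and α_d(x,y,t) = 1 if t > d(x,y). Then for all x ∈ X and A ⊆ X, δ_{α_d}(x,A) = inf_{a∈A} d(x,a) (with the convention inf ∅ = ∞). Consequently, every metric approach space is *-metrizable for every continuous t-norm * on [0,1]. -/
open scoped ENNReal

/-! `α_d(x,a,·)` is the step at `d(x,a)`, so `sup_{a∈A} α_d(x,a,r) = 1` holds
exactly when some `a ∈ A` has `d(x,a) < r`; the infimum of these `r` is `inf_{a∈A} d(x,a)`.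
Moreover `α_d` is a probabilistic metric for the minimum t-norm, and every continuous t-norm
lies below the minimum, so `α_d` is a probabilistic metric for every continuous t-norm. -/

-- `α_d(x,y,·)` is `stepDist (edist x y)`.
noncomputable def stepDist (c t : ℝ≥0∞) : ℝ := if t ≤ c then 0 else 1

section stepDist

variable {c t : ℝ≥0∞}

lemma stepDist_of_le (h : t ≤ c) : stepDist c t = 0 := if_pos h

lemma stepDist_of_lt (h : c < t) : stepDist c t = 1 := if_neg h.not_ge

lemma stepDist_mem_Icc : stepDist c t ∈ Set.Icc (0 : ℝ) 1 := by
  unfold stepDist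
  split_ifs <;> norm_num

lemma stepDist_le_one : stepDist c t ≤ 1 := stepDist_mem_Icc.2

lemma stepDist_iSup_lt (ht : 0 < t) : ⨆ s : {s : ℝ≥0∞ // s < t}, stepDist c s = stepDist c t := by
  have : Nonempty {s : ℝ≥0∞ // s < t} := ⟨⟨0, ht⟩⟩
  rcases le_or_gt t c with htc | hct
  · have hs (s : {s : ℝ≥0∞ // s < t}) : stepDist c s = 0 := stepDist_of_le (s.2.le.trans htc)
    simp only [hs, stepDist_of_le htc, ciSup_const]
  · obtain ⟨s, hcs, hst⟩ := exists_between hct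
    rw [stepDist_of_lt hct]
    refine le_antisymm (ciSup_le fun _ => stepDist_le_one) ?_
    refine le_ciSup_of_le ⟨1, ?_⟩ ⟨s, hst⟩ (stepDist_of_lt hcs).ge
    rintro _ ⟨_, rfl⟩
    exact stepDist_le_one

lemma isDistanceDistribution_stepDist (hc : c ≠ ⊤) : IsDistanceDistribution (stepDist c) where
  mem _ := stepDist_mem_Icc
  zero := stepDist_of_le bot_le
  top := stepDist_of_lt hc.lt_top
  mono s t hst := by
    rcases le_or_gt t c with htc | hct
    · rw [stepDist_of_le (hst.trans htc), stepDist_of_le htc]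
    · exact (stepDist_of_lt hct).symm ▸ stepDist_le_one
  leftCont _ ht _ := (stepDist_iSup_lt ht).symm

end stepDist

-- Also right for `S = ∅`, since `sSup ∅ = 0` in `ℝ`; this is what makes `δ_α(x, ∅) = ⊤`.
lemma Real.sSup_eq_one_iff_one_mem {S : Set ℝ} (hS : S ⊆ {0, 1}) : sSup S = 1 ↔ 1 ∈ S := by
  refine ⟨fun h => ?_, fun h => IsGreatest.csSup_eq ⟨h, fun x hx => ?_⟩⟩
  · by_contra h1
    have : S ⊆ {0} := fun x hx => (hS hx).resolve_right (by rintro rfl; exact h1 hx)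
    rcases Set.subset_singleton_iff_eq.1 this with rfl | rfl <;> simp_all
  · rcases hS hx with rfl | rfl <;> norm_num

theorem probDist_stepDist {X : Type*} (D : X → X → ℝ≥0∞) (x : X) (A : Set X) :
    probDist (fun x y => stepDist (D x y)) x A = ⨅ a : A, D x a := by
  have hsup : ∀ r, sSup ((fun a => stepDist (D x a) r) '' A) = 1 ↔ ⨅ a : A, D x a < r := by
    intro r
    rw [Real.sSup_eq_one_iff_one_mem, iInf_lt_iff]
    · simp [stepDist]
    · rintro _ ⟨a, -, rfl⟩
      by_cases h : r ≤ D x a <;> simp [stepDist, h]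
  simp only [probDist, hsup]
  exact isGLB_Ioi.sInf_eq

lemma IsContinuousTNorm.le_min {a b : ℝ} {m : ℝ → ℝ → ℝ} (hm : IsContinuousTNorm a b m) {p q : ℝ}
    (hp : p ∈ Set.Icc a b) (hq : q ∈ Set.Icc a b) : m p q ≤ min p q := by
  have hb : b ∈ Set.Icc a b := ⟨hp.1.trans hp.2, le_rfl⟩
  refine _root_.le_min ?_ ?_
  · simpa only [hm.unit hp] using hm.mono hp hp hq hb le_rfl hq.2
  · simpa only [hm.comm hp hq, hm.unit hq] using hm.mono hq hq hp hb le_rfl hp.2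

lemma IsProbMetric.of_le {X : Type*} {m m' : ℝ → ℝ → ℝ} {α : X → X → ℝ≥0∞ → ℝ}
    (hα : IsProbMetric m' α)
    (hle : ∀ ⦃p q : ℝ⦄, p ∈ Set.Icc 0 1 → q ∈ Set.Icc 0 1 → m p q ≤ m' p q) :
    IsProbMetric m α where
  dd := hα.dd
  refl := hα.refl
  symm := hα.symm
  sep := hα.sep
  triangle x y z r s :=
    (hle ((hα.dd y z).mem r) ((hα.dd x y).mem s)).trans (hα.triangle x y z r s)

theorem isProbMetric_minT_stepDist {X : Type*} [MetricSpace X] :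
    IsProbMetric minT (fun x y : X => stepDist (edist x y)) where
  dd _ _ := isDistanceDistribution_stepDist (edist_ne_top _ _)
  refl x t ht := stepDist_of_lt (by rwa [edist_self])
  symm x y t := by rw [edist_comm]
  sep x y h := by
    by_contra hxy
    simpa [stepDist_of_le le_rfl] using h _ (edist_pos.2 hxy)
  triangle x y z r s := by
    rcases le_or_gt (r + s) (edist x z) with hxz | hxz
    · rw [stepDist_of_le hxz]
      have : r ≤ edist y z ∨ s ≤ edist x y := by
        by_contra! h
        have := (edist_triangle x y z).trans_lt (ENNReal.add_lt_add h.2 h.1)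
        exact hxz.not_gt (by rwa [add_comm] at this)
      rcases this with h | h
      · exact (min_le_left _ _).trans (stepDist_of_le h).le
      · exact (min_le_right _ _).trans (stepDist_of_le h).le
    · exact (stepDist_of_lt hxz).symm ▸ (min_le_left _ _).trans stepDist_le_one

theorem stmt14 {X : Type*} [MetricSpace X]
    (αd : X → X → ℝ≥0∞ → ℝ)
    (hαd : ∀ x y t, αd x y t = if t ≤ ENNReal.ofReal (dist x y) then 0 else 1) :
    (∀ (x : X) (A : Set X), probDist αd x A = ⨅ a : A, ENNReal.ofReal (dist x a.1)) ∧
    ∀ m : ℝ → ℝ → ℝ, IsContinuousTNorm 0 1 m →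
      ProbMetrizable m (fun (x : X) (A : Set X) => ⨅ a : A, ENNReal.ofReal (dist x a.1)) := by
  have hα : αd = fun x y => stepDist (edist x y) := by
    funext x y t
    rw [hαd, edist_dist, stepDist]
  have hδ (x : X) (A : Set X) : probDist αd x A = ⨅ a : A, ENNReal.ofReal (dist x a.1) := by
    simp only [hα, probDist_stepDist, edist_dist]
  refine ⟨hδ, fun m hm => ⟨αd, ?_, fun x A => (hδ x A).symm⟩⟩
  rw [hα]
  exact isProbMetric_minT_stepDist.of_le fun p q hp hq => hm.le_min hp hq
end

section
/- Let (X, α) be a probabilistic metric space, and for x ∈ X and n ≥ 1 define λ_{x,n}(y) = inf{ r ∈ [0,∞] | α(x,y,r) > 1 − 1/n }. Then δ_α(x, A) = sup_{n≥1} inf_{a∈A} λ_{x,n}(a) for all x ∈ X and A ⊆ X. -/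
open scoped ENNReal

theorem stmt17 {X : Type*} (m : ℝ → ℝ → ℝ) (hm : IsContinuousTNorm 0 1 m)
    (α : X → X → ℝ≥0∞ → ℝ) (h : IsProbMetric m α) :
    ∀ (x : X) (A : Set X),
      probDist α x A =
        ⨆ n : ℕ, ⨅ a : A, sInf {r : ℝ≥0∞ | 1 - 1 / (n + 1 : ℝ) < α x a.1 r} := by
  intro x A
  apply le_antisymm
  · refine le_of_forall_gt_imp_ge_of_dense fun r hr => ?_
    apply sInf_le
    show sSup ((fun a => α x a r) '' A) = 1
    have hub : ∀ y ∈ (fun a => α x a r) '' A, y ≤ 1 := by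
      rintro _ ⟨a, ha, rfl⟩; exact ((h.dd x a).mem r).2
    have key : ∀ n : ℕ, ∃ y ∈ (fun a => α x a r) '' A, 1 - 1/(n+1:ℝ) < y := by
      intro n
      have h1 : (⨅ a : A, sInf {t : ℝ≥0∞ | 1 - 1/(n+1:ℝ) < α x a.1 t}) < r :=
        lt_of_le_of_lt (le_iSup (fun n : ℕ => ⨅ a : A,
          sInf {t : ℝ≥0∞ | 1 - 1/(n+1:ℝ) < α x a.1 t}) n) hr
      obtain ⟨a, ha⟩ := iInf_lt_iff.mp h1
      obtain ⟨t, ht, htr⟩ := sInf_lt_iff.mp ha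
      exact ⟨α x a.1 r, ⟨a.1, a.2, rfl⟩, lt_of_lt_of_le ht ((h.dd x a.1).mono htr.le)⟩
    obtain ⟨y0, hy0, _⟩ := key 0
    refine le_antisymm (csSup_le ⟨y0, hy0⟩ hub) ?_
    by_contra hs
    push_neg at hs
    obtain ⟨n, hn⟩ := exists_nat_one_div_lt (by linarith : (0:ℝ) < 1 - sSup ((fun a => α x a r) '' A))
    obtain ⟨y, hy, hy'⟩ := key n
    have := le_csSup ⟨1, hub⟩ hy
    linarith
  · refine iSup_le fun n => le_sInf fun r hr => ?_
    simp only [Set.mem_setOf_eq] at hr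
    have hne : ((fun a => α x a r) '' A).Nonempty := by
      by_contra hne
      rw [Set.not_nonempty_iff_eq_empty] at hne
      rw [hne, Real.sSup_empty] at hr; norm_num at hr
    have hpos : (0:ℝ) < 1/(n+1:ℝ) := by positivity
    have hc : 1 - 1/(n+1:ℝ) < sSup ((fun a => α x a r) '' A) := by rw [hr]; linarith
    obtain ⟨y, ⟨a, ha, rfl⟩, hy⟩ := exists_lt_of_lt_csSup hne hc
    refine le_trans (iInf_le _ ⟨a, ha⟩) (sInf_le ?_)
    exact hy
end

section
/- Let (X, α) be a probabilistic metric space with respect to the minimum t-norm *_M, and for each n ≥ 1 define d_n(x,y) = inf{ r ∈ [0,∞] | α(x,y,r) > 1 − 1/n }. Then each d_n is a symmetric generalized metric on X: d_n(x,x) = 0, d_n(x,y) = d_n(y,x), and d_n(y,z) + d_n(x,y) ≥ d_n(x,z) for all x, y, z ∈ X. -/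
open scoped ENNReal

theorem stmt18 {X : Type*} (α : X → X → ℝ≥0∞ → ℝ) (h : IsProbMetric minT α)
    (d : ℕ → X → X → ℝ≥0∞)
    (hd : ∀ n x y, d n x y = sInf {r : ℝ≥0∞ | 1 - 1 / (n + 1 : ℝ) < α x y r}) :
    ∀ n, (∀ x, d n x x = 0) ∧ (∀ x y, d n x y = d n y x) ∧
      ∀ x y z, d n x z ≤ d n y z + d n x y := by
  intro n
  set c : ℝ := 1 - 1 / (n + 1 : ℝ) with hc
  have hc1 : c < 1 := by
    rw [hc]
    have : (0:ℝ) < 1 / (n + 1 : ℝ) := by positivity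
    linarith
  refine ⟨?_, ?_, ?_⟩
  · intro x
    rw [hd]
    rw [← ENNReal.bot_eq_zero, sInf_eq_bot]
    intro b hb
    obtain ⟨a, ha0, hab⟩ := exists_between hb
    exact ⟨a, by rw [Set.mem_setOf_eq, h.refl x a ha0]; exact hc1, hab⟩
  · intro x y
    rw [hd, hd]
    simp only [h.symm x y]
  · intro x y z
    rw [hd, hd, hd]
    have key : ∀ r ∈ {r : ℝ≥0∞ | c < α y z r}, ∀ s ∈ {r : ℝ≥0∞ | c < α x y r},
        r + s ∈ {r : ℝ≥0∞ | c < α x z r} := by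
      intro r hr s hs
      have ht := h.triangle x y z r s
      have : c < minT (α y z r) (α x y s) := lt_min hr hs
      exact lt_of_lt_of_le this ht
    have h1 : sInf {r : ℝ≥0∞ | c < α y z r} + sInf {r : ℝ≥0∞ | c < α x y r}
        = ⨅ r ∈ {r : ℝ≥0∞ | c < α y z r}, ⨅ s ∈ {r : ℝ≥0∞ | c < α x y r}, (r + s) := by
      rw [sInf_eq_iInf, sInf_eq_iInf]
      rw [ENNReal.iInf_add]
      refine iInf_congr fun r => ?_
      rw [ENNReal.iInf_add]
      refine iInf_congr fun hr => ?_
      rw [ENNReal.add_iInf]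
      refine iInf_congr fun s => ?_
      rw [ENNReal.add_iInf]
    rw [h1]
    exact le_iInf₂ fun r hr => le_iInf₂ fun s hs => sInf_le (key r hr s hs)
end
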